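/- Let Π be a ground logic program over atoms A with rules indexed by a finite type R, let M ⊆ A be a supported model of Π, and set M' = M ∪ { dm_r : r ∈ R, the body of rule r is false in M }. Then the least model N of the Gelfond–Lifschitz reduct (T(Π))^{M'} equals M'. -/

import Mathlib

/-- A ground rule: head ← body⁺, not body⁻. -/
structure Rule (A : Type*) where
  head : A
  bodyPos : Finset A
  bodyNeg : Finset A
deriving DecidableEq

/-- The body of rule `r` is true in interpretation `M`:
`body⁺(r) ⊆ M` and `body⁻(r) ∩ M = ∅`. -/
def BodyTrue {A : Type*} (M : Set A) (r : Rule A) : Prop :=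
  ↑r.bodyPos ⊆ M ∧ ∀ a ∈ r.bodyNeg, a ∉ M

/-- `M` is a model of the program `P` (a family of rules indexed by `R`). -/
def IsModel {A R : Type*} (P : R → Rule A) (M : Set A) : Prop :=
  ∀ r, BodyTrue M (P r) → (P r).head ∈ M

/-- `M` is a supported model of `P`: a model in which every true atom
is the head of some rule of `P` whose body is true in `M`. -/
def IsSupported {A R : Type*} (P : R → Rule A) (M : Set A) : Prop :=
  IsModel P M ∧ ∀ a ∈ M, ∃ r, (P r).head = a ∧ ↑(P r).bodyPos ⊆ M ∧
    ∀ b ∈ (P r).bodyNeg, b ∉ M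

/-- `N` is a model of the Gelfond–Lifschitz reduct `P^M`: for every rule of `P`
surviving the reduct (i.e. with `body⁻(r) ∩ M = ∅`), whose negative literals are
removed, if its positive body holds in `N` then so does its head. -/
def ReductModel {A R : Type*} (P : R → Rule A) (M N : Set A) : Prop :=
  ∀ r, (∀ a ∈ (P r).bodyNeg, a ∉ M) → ↑(P r).bodyPos ⊆ N → (P r).head ∈ N

/-- `M` is a stable model of `P`: `M` is the least model of the reduct `P^M`. -/
def IsStable {A R : Type*} (P : R → Rule A) (M : Set A) : Prop :=
  ReductModel P M M ∧ ∀ N, ReductModel P M N → M ⊆ N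

/-- Index type for the rules of the transformed program `T(P)`: one rule
`head(r) ← not dm_r` per rule `r`, one rule `dm_r ← not l` per `l ∈ body⁺(r)`,
and one rule `dm_r ← l` per `l ∈ body⁻(r)`. -/
abbrev TransIdx {A R : Type*} (P : R → Rule A) : Type _ :=
  R ⊕ ((Σ r : R, {l // l ∈ (P r).bodyPos}) ⊕ (Σ r : R, {l // l ∈ (P r).bodyNeg}))

/-- The transformed program `T(P)` over atoms `A ⊕ R`, where `Sum.inr r`
plays the role of the fresh auxiliary atom `dm_r`. -/
def Transform {A R : Type*} (P : R → Rule A) : TransIdx P → Rule (A ⊕ R)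
  | Sum.inl r => ⟨Sum.inl (P r).head, ∅, {Sum.inr r}⟩
  | Sum.inr (Sum.inl ⟨r, l⟩) => ⟨Sum.inr r, ∅, {Sum.inl l.1}⟩
  | Sum.inr (Sum.inr ⟨r, l⟩) => ⟨Sum.inr r, {Sum.inl l.1}, ∅⟩

/-- `Lift P M = M ∪ { dm_r | the body of rule r is false in M }`,
viewing `M ⊆ A` as a subset of `A ⊕ R` via the left injection. -/
def Lift {A R : Type*} (P : R → Rule A) (M : Set A) : Set (A ⊕ R) :=
  Sum.inl '' M ∪ Sum.inr '' {r | ¬ BodyTrue M (P r)}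

/-!
The reduct `(T Π)^{M'}` keeps `head(r) ← ` exactly for the rules whose body is true in `M`,
`dm_r ← ` for each `l ∈ body⁺(r)` missing from `M`, and `dm_r ← l` for each `l ∈ body⁻(r)`.
Since `M` is a model, `M'` is closed under these rules. Conversely every atom of `M'` is forced:
an atom of `M` is the head of a supporting rule, and `dm_r` for a false body is produced either
outright by a positive body atom missing from `M`, or from a negative body atom of `M`,
which is itself forced by the first case.
-/

namespace Transform

variable {A R : Type*} {P : R → Rule A} {M : Set A}

@[simp]
theorem inl_mem_lift {a : A} : Sum.inl a ∈ Lift P M ↔ a ∈ M := by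
  simp [Lift]

@[simp]
theorem inr_mem_lift {r : R} : Sum.inr r ∈ Lift P M ↔ ¬ BodyTrue M (P r) := by
  simp [Lift]

theorem reductModel_lift (hM : IsModel P M) :
    ReductModel (Transform P) (Lift P M) (Lift P M) := by
  rintro (r | ⟨r, l, hl⟩ | ⟨r, l, hl⟩) hneg hpos
  · have hbody : BodyTrue M (P r) := by
      by_contra hbody
      exact hneg (Sum.inr r) (by simp [Transform]) (inr_mem_lift.mpr hbody)
    simpa [Transform] using hM r hbody
  · have hlM : l ∉ M := fun hlM => hneg (Sum.inl l) (by simp [Transform]) (inl_mem_lift.mpr hlM)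
    simpa [Transform] using fun hbody : BodyTrue M (P r) => hlM (hbody.1 hl)
  · have hlM : l ∈ M := inl_mem_lift.mp (hpos (by simp [Transform]))
    simpa [Transform] using fun hbody : BodyTrue M (P r) => hbody.2 l hl hlM

section ReductModel

variable {N : Set (A ⊕ R)} (hN : ReductModel (Transform P) (Lift P M) N)
include hN

theorem inl_head_mem_of_bodyTrue {r : R} (hr : BodyTrue M (P r)) :
    Sum.inl (P r).head ∈ N := by
  refine hN (Sum.inl r) ?_ (by simp [Transform])
  simpa [Transform] using hr

theorem inr_mem_of_mem_bodyPos_of_notMem {r : R} {l : A} (hl : l ∈ (P r).bodyPos)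
    (hlM : l ∉ M) : Sum.inr r ∈ N :=
  hN (Sum.inr (Sum.inl ⟨r, l, hl⟩)) (by simpa [Transform] using hlM) (by simp [Transform])

theorem inr_mem_of_mem_bodyNeg {r : R} {l : A} (hl : l ∈ (P r).bodyNeg)
    (hlN : Sum.inl l ∈ N) : Sum.inr r ∈ N :=
  hN (Sum.inr (Sum.inr ⟨r, l, hl⟩)) (by simp [Transform]) (by simpa [Transform] using hlN)

theorem lift_subset (hsupp : ∀ a ∈ M, ∃ r, (P r).head = a ∧ BodyTrue M (P r)) :
    Lift P M ⊆ N := by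
  have hMN : ∀ a ∈ M, Sum.inl a ∈ N := by
    intro a ha
    obtain ⟨r, rfl, hr⟩ := hsupp a ha
    exact inl_head_mem_of_bodyTrue hN hr
  rintro x (⟨a, ha, rfl⟩ | ⟨r, hr, rfl⟩)
  · exact hMN a ha
  · simp only [BodyTrue, not_and_or, Set.not_subset, not_forall, not_not] at hr
    rcases hr with ⟨l, hl, hlM⟩ | ⟨l, hl, hlM⟩
    · exact inr_mem_of_mem_bodyPos_of_notMem hN hl hlM
    · exact inr_mem_of_mem_bodyNeg hN hl (hMN l hlM)

end ReductModel

end Transform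

theorem least_model_of_transform_reduct_eq_lift_general
    {A R : Type*} (P : R → Rule A) (M : Set A)
    (h : IsSupported P M) (N : Set (A ⊕ R))
    (hN : ReductModel (Transform P) (Lift P M) N)
    (hleast : ∀ N₂, ReductModel (Transform P) (Lift P M) N₂ → N ⊆ N₂) :
    N = Lift P M :=
  (hleast _ (Transform.reductModel_lift h.1)).antisymm (Transform.lift_subset hN h.2)

/-- If `M` is a supported model of `P` and
`M' = M ∪ { dm_r | body of r is false in M }`, then the least model `N` of the
Gelfond–Lifschitz reduct `(T(P))^{M'}` equals `M'`. -/
theorem least_model_of_transform_reduct_eq_lift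
    {A R : Type*} [Fintype R] (P : R → Rule A) (M : Set A)
    (h : IsSupported P M) (N : Set (A ⊕ R))
    (hN : ReductModel (Transform P) (Lift P M) N)
    (hleast : ∀ N₂, ReductModel (Transform P) (Lift P M) N₂ → N ⊆ N₂) :
    N = Lift P M :=
  least_model_of_transform_reduct_eq_lift_general P M h N hN hleast
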